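/- arXiv:1303.4569 — 4 statements merged into one kernel-verified Lean document; each statement's English description precedes it below -/
import Mathlib

section
/- Let A be a unital C*-algebra with triple product {x,y,z} = (x y* z + z y* x)/2, and let δ : A → A be a triple derivation. Then δ is a generalised Jordan derivation: δ(a ∘ b) = δ(a) ∘ b + a ∘ δ(b) - U_{a,b}(δ(1)) for all a,b in A, where a ∘ b = (ab + ba)/2 and U_{a,b}(x) = (a x b + b x a)/2. -/
/-! Taking `x = y = z = 1` in the derivation identity gives `δ 1 = 2 δ 1 + (δ 1)⋆`, so `δ 1` is
skew-adjoint. Since `{a, 1, b} = a ∘ b`, applying `δ` to `{a, 1, b}` yields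
`δ (a ∘ b) = δ a ∘ b + a ∘ δ b + U_{a,b}((δ 1)⋆)`, and `(δ 1)⋆ = -δ 1` finishes the proof. -/

noncomputable def tp {A : Type*} [NormedRing A] [StarRing A] [NormedAlgebra ℂ A]
    (x y z : A) : A :=
  (2:ℂ)⁻¹ • (x * star y * z + z * star y * x)

section TripleDerivation

variable {A : Type*} [NormedRing A] [StarRing A] [NormedAlgebra ℂ A]

def IsTripleDerivation (δ : A →ₗ[ℂ] A) : Prop :=
  ∀ x y z : A, δ (tp x y z) = tp (δ x) y z + tp x (δ y) z + tp x y (δ z)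

lemma tp_one_middle (x z : A) : tp x 1 z = (2:ℂ)⁻¹ • (x * z + z * x) := by
  simp only [tp, star_one, mul_one]

lemma tp_one_one_left (x : A) : tp 1 1 x = x := by
  rw [tp_one_middle, one_mul, mul_one, ← two_smul ℂ, smul_smul]
  norm_num

lemma tp_one_one_right (x : A) : tp x 1 1 = x := by
  rw [tp_one_middle, one_mul, mul_one, ← two_smul ℂ, smul_smul]
  norm_num

lemma tp_one_star_one (x : A) : tp 1 x 1 = star x := by
  rw [tp, one_mul, mul_one, ← two_smul ℂ, smul_smul]
  norm_num

lemma IsTripleDerivation.star_map_one {δ : A →ₗ[ℂ] A} (hδ : IsTripleDerivation δ) :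
    star (δ 1) = -δ 1 := by
  have h := hδ 1 1 1
  rw [tp_one_one_left, tp_one_one_right, tp_one_star_one, tp_one_one_left] at h
  rw [eq_neg_iff_add_eq_zero]
  exact add_left_cancel (a := δ 1) (by rw [add_zero, ← add_assoc, ← h])

lemma IsTripleDerivation.map_jordanProduct {δ : A →ₗ[ℂ] A} (hδ : IsTripleDerivation δ)
    (a b : A) :
    δ ((2:ℂ)⁻¹ • (a * b + b * a)) =
      (2:ℂ)⁻¹ • (δ a * b + b * δ a) + (2:ℂ)⁻¹ • (a * δ b + δ b * a)
        - (2:ℂ)⁻¹ • (a * δ 1 * b + b * δ 1 * a) := by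
  have h := hδ a 1 b
  rw [tp_one_middle, tp_one_middle, tp_one_middle, tp, hδ.star_map_one] at h
  rw [h]
  simp only [mul_neg, neg_mul, ← neg_add, smul_neg]
  abel

end TripleDerivation

theorem stmt6_general {A : Type*} [NormedRing A] [StarRing A]
    [NormedAlgebra ℂ A] (δ : A →ₗ[ℂ] A) (hδ : ∀ x y z : A, δ (tp x y z) = tp (δ x) y z + tp x (δ y) z + tp x y (δ z)) (a b : A) :
    δ ((2:ℂ)⁻¹ • (a * b + b * a)) =
      (2:ℂ)⁻¹ • (δ a * b + b * δ a) + (2:ℂ)⁻¹ • (a * δ b + δ b * a)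
        - (2:ℂ)⁻¹ • (a * δ 1 * b + b * δ 1 * a) :=
  IsTripleDerivation.map_jordanProduct hδ a b

theorem stmt6 {A : Type*} [NormedRing A] [StarRing A] [CStarRing A]
    [NormedAlgebra ℂ A] [StarModule ℂ A] [CompleteSpace A] (δ : A →ₗ[ℂ] A) (hδ : ∀ x y z : A, δ (tp x y z) = tp (δ x) y z + tp x (δ y) z + tp x y (δ z)) (a b : A) :
    δ ((2:ℂ)⁻¹ • (a * b + b * a)) =
      (2:ℂ)⁻¹ • (δ a * b + b * δ a) + (2:ℂ)⁻¹ • (a * δ b + δ b * a)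
        - (2:ℂ)⁻¹ • (a * δ 1 * b + b * δ 1 * a) :=
  stmt6_general δ hδ a b
end

section
/- Let A be a unital C*-algebra with triple product {x,y,z} = (x y* z + z y* x)/2, and let δ : A → A be a triple derivation. Then δ(a*) = 2 (δ(1) ∘ a*) + δ(a)* for every a in A, where x ∘ y = (xy+yx)/2. -/
section TripleProduct

variable {A : Type*} [NormedRing A] [StarRing A] [NormedAlgebra ℂ A]

theorem tp_one_left (y z : A) : tp 1 y z = (2:ℂ)⁻¹ • (star y * z + z * star y) := by
  simp only [tp, one_mul, mul_one]

theorem tp_one_right (x y : A) : tp x y 1 = (2:ℂ)⁻¹ • (x * star y + star y * x) := by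
  simp only [tp, one_mul, mul_one]

theorem tp_one_one (y : A) : tp 1 y 1 = star y := by
  rw [tp_one_left, mul_one, one_mul, ← two_smul ℂ (star y), smul_smul]
  norm_num

end TripleProduct

theorem stmt7_general {A : Type*} [NormedRing A] [StarRing A]
    [NormedAlgebra ℂ A] (δ : A →ₗ[ℂ] A) (hδ : ∀ x y z : A, δ (tp x y z) = tp (δ x) y z + tp x (δ y) z + tp x y (δ z)) (a : A) :
    δ (star a) = (2:ℂ) • ((2:ℂ)⁻¹ • (δ 1 * star a + star a * δ 1)) + star (δ a) := by
  have expand := hδ 1 a 1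
  rw [tp_one_one, tp_one_right, tp_one_one, tp_one_left] at expand
  rw [expand]
  module

theorem stmt7 {A : Type*} [NormedRing A] [StarRing A] [CStarRing A]
    [NormedAlgebra ℂ A] [StarModule ℂ A] [CompleteSpace A] (δ : A →ₗ[ℂ] A) (hδ : ∀ x y z : A, δ (tp x y z) = tp (δ x) y z + tp x (δ y) z + tp x y (δ z)) (a : A) :
    δ (star a) = (2:ℂ) • ((2:ℂ)⁻¹ • (δ 1 * star a + star a * δ 1)) + star (δ a) :=
  stmt7_general δ hδ a
end

section
/- Let A be a unital C*-algebra with triple product {x,y,z} = (x y* z + z y* x)/2, and let δ : A → A be a triple derivation. Then the map δ - δ(½δ(1), 1), where δ(c,d)(x) := {c,d,x} - {d,c,x}, is a *-derivation on A. -/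
theorem add_self_inj {M : Type*} [AddMonoid M] [IsAddTorsionFree M] {x y : M} :
    x + x = y + y ↔ x = y := by
  simp only [← two_nsmul, nsmul_right_inj two_ne_zero]

theorem eq_zero_of_add_self_eq_zero {M : Type*} [AddMonoid M] [IsAddTorsionFree M] {x : M}
    (h : x + x = 0) : x = 0 :=
  add_self_inj.1 (by rw [h, add_zero])

section Ring

variable {R : Type*} [Ring R]

variable (R) in
def IsSemiprimeRing : Prop :=
  ∀ w : R, (∀ y : R, w * y * w = 0) → w = 0

namespace IsSemiprimeRing

theorem mul_mul_eq_zero_of_add_swap (hR : IsSemiprimeRing R) [IsAddTorsionFree R] {p q : R}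
    (h : ∀ x, p * x * q + q * x * p = 0) (x : R) : p * x * q = 0 := by
  refine hR _ fun y ↦ eq_zero_of_add_self_eq_zero ?_
  linear_combination (norm := noncomm_ring)
    (2 * (p * x * q * y)) * h x - h (x * q * y) * (x * p) - h x * (y * q * x * p)
      + (q * x) * h y * (x * p)

theorem mul_mul_eq_zero_of_add (hR : IsSemiprimeRing R) {p q p' q' : R}
    (h : ∀ x, p * x * q + p' * x * q' = 0) (h' : ∀ x, p' * x * q = 0) (x : R) :
    p * x * q = 0 := by
  refine hR _ fun y ↦ ?_
  linear_combination (norm := noncomm_ring) h x * (y * p * x * q) - h' (x * q' * y * p * x)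

theorem eq_zero_of_isNilpotent_of_forall_commute (hR : IsSemiprimeRing R) {q : R}
    (hq : IsNilpotent q) (hc : ∀ y, Commute q y) : q = 0 := by
  obtain ⟨n, hn⟩ := hq
  suffices ∀ n : ℕ, q ^ (n + 1) = 0 → q = 0 by
    rcases n with _ | n
    · simpa using congrArg (· * q) hn
    · exact this n hn
  intro n
  induction n with
  | zero => simp
  | succ n ih =>
    refine fun h ↦ ih (hR _ fun y ↦ ?_)
    calc q ^ (n + 1) * y * q ^ (n + 1) = q ^ (n + 2) * q ^ n * y := by
          rw [mul_assoc, ← ((hc y).pow_left _).eq, ← mul_assoc, ← pow_add, ← pow_add]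
          ring_nf
      _ = 0 := by rw [h, zero_mul, zero_mul]

end IsSemiprimeRing

theorem CStarRing.isSemiprimeRing {E : Type*} [NormedRing E] [StarRing E] [CStarRing E] :
    IsSemiprimeRing E := by
  intro w hw
  have hsq : (w * star w) * (w * star w) = 0 := by
    rw [← mul_assoc, hw, zero_mul]
  have hsa : IsSelfAdjoint (w * star w) := .mul_star_self w
  rw [← mul_star_self_eq_zero_iff, ← norm_eq_zero, ← sq_eq_zero_iff, ← hsa.norm_mul_self, hsq,
    norm_zero]

def IsJordanTripleDerivation (d : R →+ R) : Prop :=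
  ∀ a m c : R, d (a * m * c + c * m * a) =
    d a * m * c + c * m * d a + a * d m * c + c * d m * a + a * m * d c + d c * m * a

def leibnizDefect (d : R →+ R) (a b : R) : R := d (a * b) - d a * b - a * d b

theorem leibnizDefect_add_left (d : R →+ R) (a a' b : R) :
    leibnizDefect d (a + a') b = leibnizDefect d a b + leibnizDefect d a' b := by
  simp only [leibnizDefect, add_mul, map_add]; abel

theorem leibnizDefect_add_right (d : R →+ R) (a b b' : R) :
    leibnizDefect d a (b + b') = leibnizDefect d a b + leibnizDefect d a b' := by
  simp only [leibnizDefect, mul_add, map_add]; abel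

namespace IsJordanTripleDerivation

variable {d : R →+ R}

theorem map_mul_mul_self [IsAddTorsionFree R] (hd : IsJordanTripleDerivation d) (p m : R) :
    d (p * m * p) = d p * m * p + p * d m * p + p * m * d p := by
  have h := hd p m p
  rw [map_add] at h
  exact add_self_inj.1 (by rw [h]; abel)

theorem map_mul_add_mul (hd : IsJordanTripleDerivation d) (hd1 : d 1 = 0) (p r : R) :
    d (p * r + r * p) = d p * r + r * d p + p * d r + d r * p := by
  simpa [hd1] using hd p 1 r

theorem leibnizDefect_add_swap (hd : IsJordanTripleDerivation d) (hd1 : d 1 = 0) (a b : R) :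
    leibnizDefect d a b + leibnizDefect d b a = 0 := by
  have h := hd.map_mul_add_mul hd1 a b
  rw [map_add] at h
  simp only [leibnizDefect]
  linear_combination (norm := noncomm_ring) h

theorem leibnizDefect_mul_mul_lie_add [IsAddTorsionFree R] (hd : IsJordanTripleDerivation d)
    (hd1 : d 1 = 0) (a b x : R) :
    leibnizDefect d a b * x * ⁅b, a⁆ + ⁅b, a⁆ * x * leibnizDefect d a b = 0 := by
  -- `(ab) x (ba) = a (bxb) a` and `(ba) x (ab) = b (axa) b` expand twice by `map_mul_mul_self`.
  have h := hd (a * b) x (b * a)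
  rw [show a * b * x * (b * a) = a * (b * x * b) * a by noncomm_ring,
    show b * a * x * (a * b) = b * (a * x * a) * b by noncomm_ring, map_add,
    hd.map_mul_mul_self a (b * x * b), hd.map_mul_mul_self b (a * x * a),
    hd.map_mul_mul_self b x, hd.map_mul_mul_self a x] at h
  have hs := hd.leibnizDefect_add_swap hd1 a b
  simp only [leibnizDefect, Ring.lie_def] at h hs ⊢
  linear_combination (norm := noncomm_ring) -h - (a * b * x) * hs - hs * (x * (a * b))

theorem leibnizDefect_mul_mul_lie_self [IsAddTorsionFree R] (hR : IsSemiprimeRing R)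
    (hd : IsJordanTripleDerivation d) (hd1 : d 1 = 0) (a b x : R) :
    leibnizDefect d a b * x * ⁅b, a⁆ = 0 :=
  hR.mul_mul_eq_zero_of_add_swap (hd.leibnizDefect_mul_mul_lie_add hd1 a b) x

theorem leibnizDefect_mul_mul_lie_left [IsAddTorsionFree R] (hR : IsSemiprimeRing R)
    (hd : IsJordanTripleDerivation d) (hd1 : d 1 = 0) (a b c x : R) :
    leibnizDefect d a b * x * ⁅c, a⁆ = 0 := by
  refine hR.mul_mul_eq_zero_of_add (p' := leibnizDefect d a c) (q' := ⁅b, a⁆) (fun x ↦ ?_)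
    (hd.leibnizDefect_mul_mul_lie_self hR hd1 a c) x
  have h := hd.leibnizDefect_mul_mul_lie_self hR hd1 a (b + c) x
  rw [leibnizDefect_add_right] at h
  linear_combination (norm := (simp only [Ring.lie_def]; noncomm_ring))
    h - hd.leibnizDefect_mul_mul_lie_self hR hd1 a b x
      - hd.leibnizDefect_mul_mul_lie_self hR hd1 a c x

theorem leibnizDefect_mul_mul_lie [IsAddTorsionFree R] (hR : IsSemiprimeRing R)
    (hd : IsJordanTripleDerivation d) (hd1 : d 1 = 0) (a b c r x : R) :
    leibnizDefect d a b * x * ⁅c, r⁆ = 0 := by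
  refine hR.mul_mul_eq_zero_of_add (p' := leibnizDefect d r b) (q' := ⁅c, a⁆) (fun x ↦ ?_)
    (hd.leibnizDefect_mul_mul_lie_left hR hd1 r b c) x
  have h := hd.leibnizDefect_mul_mul_lie_left hR hd1 (a + r) b c x
  rw [leibnizDefect_add_left] at h
  linear_combination (norm := (simp only [Ring.lie_def]; noncomm_ring))
    h - hd.leibnizDefect_mul_mul_lie_left hR hd1 a b c x
      - hd.leibnizDefect_mul_mul_lie_left hR hd1 r b c x

theorem commute_leibnizDefect [IsAddTorsionFree R] (hR : IsSemiprimeRing R)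
    (hd : IsJordanTripleDerivation d) (hd1 : d 1 = 0) (a b y : R) :
    Commute (leibnizDefect d a b) y := by
  refine sub_eq_zero.1 (hR _ fun x ↦ ?_)
  have h := hd.leibnizDefect_mul_mul_lie hR hd1 a b (leibnizDefect d a b) y
  simp only [Ring.lie_def] at h
  linear_combination (norm := noncomm_ring) h (y * x) - y * h x

theorem map_mul [IsAddTorsionFree R] (hR : IsSemiprimeRing R) (hd : IsJordanTripleDerivation d)
    (hd1 : d 1 = 0) (a b : R) : d (a * b) = d a * b + a * d b := by
  have hc := hd.commute_leibnizDefect hR hd1 a b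
  set q := leibnizDefect d a b with hq_def
  set u := ⁅b, a⁆ with hu_def
  have hqu : q * u = 0 := by simpa using hd.leibnizDefect_mul_mul_lie_self hR hd1 a b 1
  have huq : u * q = 0 := (hc u).eq ▸ hqu
  have hJ := hd.map_mul_add_mul hd1 q u
  rw [hqu, huq, add_zero, map_zero] at hJ
  have hqqdu : q * q * d u = 0 := by
    refine eq_zero_of_add_self_eq_zero ?_
    linear_combination (norm := noncomm_ring)
      -(q * hJ) - (hc (d q)).eq * u - d q * hqu - hqu * d q + q * (hc (d u)).eq
  have htwo : q + q = -d u - ⁅d a, b⁆ - ⁅a, d b⁆ := by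
    have h := hd.map_mul_add_mul hd1 a b
    rw [map_add] at h
    rw [hu_def, Ring.lie_def, map_sub]
    simp only [hq_def, leibnizDefect, Ring.lie_def]
    linear_combination (norm := noncomm_ring) h
  have hq3 : q ^ 3 = 0 := by
    refine eq_zero_of_add_self_eq_zero ?_
    have h₁ : q * q * ⁅d a, b⁆ = 0 := hd.leibnizDefect_mul_mul_lie hR hd1 a b (d a) b q
    have h₂ : q * q * ⁅a, d b⁆ = 0 := hd.leibnizDefect_mul_mul_lie hR hd1 a b a (d b) q
    linear_combination (norm := noncomm_ring) q * q * htwo - hqqdu - h₁ - h₂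
  have hq0 := hR.eq_zero_of_isNilpotent_of_forall_commute ⟨3, hq3⟩ hc
  rwa [hq_def, leibnizDefect, sub_sub, sub_eq_zero] at hq0

end IsJordanTripleDerivation

def subAnticommutator (d : R →+ R) (k : R) : R →+ R :=
  d - (AddMonoidHom.mulLeft k + AddMonoidHom.mulRight k)

@[simp]
theorem subAnticommutator_apply (d : R →+ R) (k x : R) :
    subAnticommutator d k x = d x - (k * x + x * k) :=
  rfl

theorem subAnticommutator_map_one {d : R →+ R} {k : R} (hk : k + k = d 1) :
    subAnticommutator d k 1 = 0 := by
  simp [hk]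

end Ring

section TripleDerivation

variable {A : Type*} [NormedRing A] [StarRing A] [NormedAlgebra ℂ A]

theorem tp_sub_tp_one_of_star_eq_neg {k : A} (hk : star k = -k) (x : A) :
    tp k 1 x - tp 1 k x = k * x + x * k := by
  simp only [tp, hk, star_one, mul_one, one_mul, mul_neg, neg_mul, ← neg_add, smul_neg,
    sub_neg_eq_add, ← smul_add]
  rw [← two_smul ℂ, smul_smul]
  norm_num

namespace IsTripleDerivation

variable {δ : A →ₗ[ℂ] A}

theorem map_mul_star_mul_add (hδ : IsTripleDerivation δ) (x y z : A) :
    δ (x * star y * z + z * star y * x) =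
      δ x * star y * z + z * star y * δ x + (x * star (δ y) * z + z * star (δ y) * x)
        + (x * star y * δ z + δ z * star y * x) := by
  have h := hδ x y z
  simp only [tp, map_smul, ← smul_add] at h
  exact smul_right_injective A (by norm_num) h

theorem star_map_one_s9 (hδ : IsTripleDerivation δ) : star (δ 1) = -δ 1 := by
  have := IsAddTorsionFree.of_isTorsionFree ℂ A
  have h := hδ.map_mul_star_mul_add 1 1 1
  simp only [star_one, mul_one, one_mul, map_add] at h
  exact add_self_inj.1 (by linear_combination (norm := abel) -h)

theorem map_star (hδ : IsTripleDerivation δ) (a : A) :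
    δ (star a) = star (δ a) + (δ 1 * star a + star a * δ 1) := by
  have := IsAddTorsionFree.of_isTorsionFree ℂ A
  have h := hδ.map_mul_star_mul_add 1 a 1
  simp only [one_mul, mul_one, map_add] at h
  exact add_self_inj.1 (by rw [h]; abel)

variable {k : A}

theorem star_eq_neg_of_add_self_eq (hδ : IsTripleDerivation δ) (hk : k + k = δ 1) :
    star k = -k := by
  have := IsAddTorsionFree.of_isTorsionFree ℂ A
  refine add_self_inj.1 ?_
  rw [← star_add, hk, hδ.star_map_one_s9, ← hk, neg_add]

theorem subAnticommutator_map_star (hδ : IsTripleDerivation δ) (hk : k + k = δ 1) (a : A) :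
    subAnticommutator δ.toAddMonoidHom k (star a) =
      star (subAnticommutator δ.toAddMonoidHom k a) := by
  simp only [subAnticommutator_apply, LinearMap.toAddMonoidHom_coe, hδ.map_star, star_sub,
    star_add, star_mul, hδ.star_eq_neg_of_add_self_eq hk, ← hk]
  noncomm_ring

theorem isJordanTripleDerivation_subAnticommutator (hδ : IsTripleDerivation δ)
    (hk : k + k = δ 1) : IsJordanTripleDerivation (subAnticommutator δ.toAddMonoidHom k) := by
  intro a m c
  have h := hδ.map_mul_star_mul_add a (star m) c
  have hm : star (δ (star m)) = δ m - (k * m + m * k + k * m + m * k) := by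
    simp only [hδ.map_star, star_add, star_mul, star_star, ← hk,
      hδ.star_eq_neg_of_add_self_eq hk]
    noncomm_ring
  rw [star_star, hm] at h
  simp only [subAnticommutator_apply, LinearMap.toAddMonoidHom_coe, h]
  noncomm_ring

end IsTripleDerivation

end TripleDerivation

theorem stmt9_general {A : Type*} [NormedRing A] [StarRing A] [CStarRing A]
    [NormedAlgebra ℂ A] (δ : A →ₗ[ℂ] A) (hδ : ∀ x y z : A, δ (tp x y z) = tp (δ x) y z + tp x (δ y) z + tp x y (δ z)) :
    (∀ a b : A,
      (δ (a * b) - (tp ((2:ℂ)⁻¹ • δ 1) 1 (a * b) - tp 1 ((2:ℂ)⁻¹ • δ 1) (a * b))) =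
        (δ a - (tp ((2:ℂ)⁻¹ • δ 1) 1 a - tp 1 ((2:ℂ)⁻¹ • δ 1) a)) * b
        + a * (δ b - (tp ((2:ℂ)⁻¹ • δ 1) 1 b - tp 1 ((2:ℂ)⁻¹ • δ 1) b))) ∧
    (∀ a : A,
      (δ (star a) - (tp ((2:ℂ)⁻¹ • δ 1) 1 (star a) - tp 1 ((2:ℂ)⁻¹ • δ 1) (star a))) =
        star (δ a - (tp ((2:ℂ)⁻¹ • δ 1) 1 a - tp 1 ((2:ℂ)⁻¹ • δ 1) a))) := by
  have hδ : IsTripleDerivation δ := hδ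
  have := IsAddTorsionFree.of_isTorsionFree ℂ A
  set k : A := (2:ℂ)⁻¹ • δ 1
  have hk : k + k = δ 1 := by
    rw [← two_smul ℂ, smul_smul]
    norm_num
  have hD (x : A) : δ x - (tp k 1 x - tp 1 k x) = subAnticommutator δ.toAddMonoidHom k x := by
    rw [tp_sub_tp_one_of_star_eq_neg (hδ.star_eq_neg_of_add_self_eq hk),
      subAnticommutator_apply, LinearMap.toAddMonoidHom_coe]
  simp only [hD]
  exact ⟨(hδ.isJordanTripleDerivation_subAnticommutator hk).map_mul CStarRing.isSemiprimeRing
    (subAnticommutator_map_one hk), hδ.subAnticommutator_map_star hk⟩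

theorem stmt9 {A : Type*} [NormedRing A] [StarRing A] [CStarRing A]
    [NormedAlgebra ℂ A] [StarModule ℂ A] [CompleteSpace A] (δ : A →ₗ[ℂ] A) (hδ : ∀ x y z : A, δ (tp x y z) = tp (δ x) y z + tp x (δ y) z + tp x y (δ z)) :
    (∀ a b : A,
      (δ (a * b) - (tp ((2:ℂ)⁻¹ • δ 1) 1 (a * b) - tp 1 ((2:ℂ)⁻¹ • δ 1) (a * b))) =
        (δ a - (tp ((2:ℂ)⁻¹ • δ 1) 1 a - tp 1 ((2:ℂ)⁻¹ • δ 1) a)) * b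
        + a * (δ b - (tp ((2:ℂ)⁻¹ • δ 1) 1 b - tp 1 ((2:ℂ)⁻¹ • δ 1) b))) ∧
    (∀ a : A,
      (δ (star a) - (tp ((2:ℂ)⁻¹ • δ 1) 1 (star a) - tp 1 ((2:ℂ)⁻¹ • δ 1) (star a))) =
        star (δ a - (tp ((2:ℂ)⁻¹ • δ 1) 1 a - tp 1 ((2:ℂ)⁻¹ • δ 1) a))) :=
  stmt9_general δ hδ
end

section
/- Let A be a unital C*-algebra and T : A → A a linear map such that for each a ∈ A there exists a triple derivation δ_a on A (for the triple product {x,y,z} = (x y* z + z y* x)/2) with T(a) = δ_a(a). Then P₀(e)(T(e)) = 0 and P₂(e)(T(e)) = -Q(e)(T(e)) for every partial isometry e in A. -/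
/-! Evaluating a triple derivation `δ` on `e = {e,e,e}` gives
`δ e = e e⋆ δe + δe e⋆ e + e (δe)⋆ e`, i.e. `δ e = 2 L(e,e) δe + Q(e) δe`, and a local triple
derivation `T` inherits this identity at `e`. Sandwiching it between `e e⋆` and `e⋆ e` yields
`P₂(e)(Te) = -Q(e)(Te)`, and substituting back gives `P₀(e)(Te) = 0`. -/

section StarRing

variable {R : Type*} [Ring R] [StarRing R] {e : R}

theorem star_mul_self_mul_star_of_partialIsometry (he : e * star e * e = e) :
    star e * e * star e = star e := by
  simpa [star_mul, mul_assoc] using congrArg star he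

theorem peirce_two_add_quadratic_eq_zero (he : e * star e * e = e) {x : R}
    (hx : x = e * star e * x + x * star e * e + e * star x * e) :
    e * star e * x * star e * e + e * star x * e = 0 := by
  have he' := star_mul_self_mul_star_of_partialIsometry he
  have hee : ∀ y : R, e * (star e * (e * y)) = e * y := fun y => by
    rw [← mul_assoc, ← mul_assoc, he]
  have hee' : ∀ y : R, star e * (e * (star e * y)) = star e * y := fun y => by
    rw [← mul_assoc, ← mul_assoc, he']
  have he₃ : e * (star e * e) = e := by rw [← mul_assoc, he]
  have hsandwich := congrArg (fun y => e * star e * y * star e * e) hx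
  simp only [mul_add, add_mul, mul_assoc, hee, hee', he₃] at hsandwich
  simp only [mul_assoc]
  rw [add_assoc] at hsandwich
  exact left_eq_add.mp hsandwich

end StarRing

section TripleProduct

variable {A : Type*} [NormedRing A] [StarRing A] [NormedAlgebra ℂ A]

theorem tp_same_outer (x y : A) : tp x y x = x * star y * x := by
  rw [tp, ← two_smul ℂ, smul_smul, inv_mul_cancel₀ two_ne_zero, one_smul]

theorem two_smul_tp_same_left (e x : A) :
    (2:ℂ) • tp e e x = e * star e * x + x * star e * e := by
  rw [tp, smul_smul, mul_inv_cancel₀ two_ne_zero, one_smul]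

theorem tp_self_of_partialIsometry {e : A} (he : e * star e * e = e) : tp e e e = e := by
  rw [tp_same_outer, he]

theorem apply_eq_of_tripleDerivation {δ : A →ₗ[ℂ] A}
    (hδ : ∀ x y z : A, δ (tp x y z) = tp (δ x) y z + tp x (δ y) z + tp x y (δ z))
    {e : A} (he : e * star e * e = e) :
    δ e = e * star e * δ e + δ e * star e * e + e * star (δ e) * e := by
  conv_lhs => rw [← tp_self_of_partialIsometry he, hδ]
  simp only [tp]
  module

end TripleProduct

theorem stmt19_general {A : Type*} [NormedRing A] [StarRing A]
    [NormedAlgebra ℂ A] (T : A →ₗ[ℂ] A)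
    (hT : ∀ a : A, ∃ δ : A →ₗ[ℂ] A,
      (∀ x y z : A, δ (tp x y z) = tp (δ x) y z + tp x (δ y) z + tp x y (δ z)) ∧ T a = δ a)
    (e : A) (he : e * star e * e = e) :
    (T e - (2:ℂ) • tp e e (T e) + tp e (tp e (T e) e) e = 0) ∧
    (tp e (tp e (T e) e) e = - tp e (T e) e) := by
  obtain ⟨δ, hδ, hTe⟩ := hT e
  have hTe_eq : T e = e * star e * T e + T e * star e * e + e * star (T e) * e :=
    hTe ▸ apply_eq_of_tripleDerivation hδ he
  have hsum := peirce_two_add_quadratic_eq_zero he hTe_eq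
  have hQQ : tp e (tp e (T e) e) e = e * star e * T e * star e * e := by
    simp only [tp_same_outer, star_mul, star_star, mul_assoc]
  rw [hQQ, two_smul_tp_same_left, tp_same_outer]
  constructor
  · nth_rewrite 1 [hTe_eq]
    rw [add_sub_cancel_left, add_comm]
    exact hsum
  · exact eq_neg_of_add_eq_zero_left hsum

theorem stmt19 {A : Type*} [NormedRing A] [StarRing A] [CStarRing A]
    [NormedAlgebra ℂ A] [StarModule ℂ A] [CompleteSpace A] (T : A →ₗ[ℂ] A)
    (hT : ∀ a : A, ∃ δ : A →ₗ[ℂ] A,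
      (∀ x y z : A, δ (tp x y z) = tp (δ x) y z + tp x (δ y) z + tp x y (δ z)) ∧ T a = δ a)
    (e : A) (he : e * star e * e = e) :
    (T e - (2:ℂ) • tp e e (T e) + tp e (tp e (T e) e) e = 0) ∧
    (tp e (tp e (T e) e) e = - tp e (T e) e) :=
  stmt19_general T hT e he
end
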